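/- arXiv:1112.5753 — 2 statements merged into one kernel-verified Lean document; each statement's English description precedes it below -/
import Mathlib

section
/- For every natural number n ≥ 1 there exist irreducible elements H, G₁, …, G_{n+1} of Int(ℤ) such that X · H(X) = G₁(X) · G₂(X) · … · G_{n+1}(X). (Note that the polynomial X is itself irreducible in Int(ℤ), so the product of the two irreducibles X and H has a factorization of length n + 1.) -/
open Polynomial

/-- The ring of integer-valued polynomials `Int(ℤ) = {f ∈ ℚ[X] | f(ℤ) ⊆ ℤ}`,
as a subring of ℚ[X]. -/
noncomputable def IntValued : Subring (Polynomial ℚ) where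
  carrier := {f | ∀ c : ℤ, ∃ m : ℤ, f.eval (c : ℚ) = (m : ℚ)}
  zero_mem' := fun c => ⟨0, by simp⟩
  one_mem' := fun c => ⟨1, by simp⟩
  add_mem' := by
    rintro f g hf hg c
    obtain ⟨m, hm⟩ := hf c
    obtain ⟨n, hn⟩ := hg c
    exact ⟨m + n, by simp [hm, hn]⟩
  mul_mem' := by
    rintro f g hf hg c
    obtain ⟨m, hm⟩ := hf c
    obtain ⟨n, hn⟩ := hg c
    exact ⟨m * n, by simp [hm, hn]⟩
  neg_mem' := by
    rintro f hf c
    obtain ⟨m, hm⟩ := hf c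
    exact ⟨-m, by simp [hm]⟩

/-- The polynomial `X` as an element of `Int(ℤ)`. -/
noncomputable def Xiv : IntValued := ⟨Polynomial.X, fun c => ⟨c, by simp⟩⟩

/-!
The binomial polynomials `binom(X + a, m)`, `m ≥ 1`, are irreducible in `Int(ℤ)`. Indeed, for
`f ∈ Int(ℤ)` of degree `k` the number `k! · lc(f)` is the `k`-th forward difference of `f` at `0`,
hence an integer; so a factorization `binom(X + a, m) = g h` gives `choose m (deg g) = ±1`, forcing
one factor to be a constant, and that constant divides the value `binom(m, m) = 1` at `X = m - a`.
With `m = 2ⁿ` the identity `X · binom(X - 1, m - 1) = m · binom(X, m)` is the required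
factorization `X · H = 2 ⋯ 2 · binom(X, 2ⁿ)`, and `2` stays irreducible because `Int(ℤ) ∩ ℚ = ℤ`.
-/

open Nat

lemma exists_fwdDiff_iter_eq_intCast {R : Type*} [Ring R] {f : R → R}
    (hf : ∀ c : ℤ, ∃ m : ℤ, f c = m) (k : ℕ) :
    ∀ c : ℤ, ∃ m : ℤ, (fwdDiff 1)^[k] f c = m := by
  induction k with
  | zero => exact hf
  | succ k ih =>
    intro c
    obtain ⟨a, ha⟩ := ih (c + 1)
    obtain ⟨b, hb⟩ := ih c
    refine ⟨a - b, ?_⟩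
    rw [Function.iterate_succ_apply', fwdDiff, Int.cast_sub, ← ha, ← hb, Int.cast_add,
      Int.cast_one]

noncomputable def binomialPoly (m : ℕ) : ℚ[X] := C (m ! : ℚ)⁻¹ * descPochhammer ℚ m

lemma binomialPoly_eval_intCast (m : ℕ) (c : ℤ) :
    (binomialPoly m).eval (c : ℚ) = Ring.choose c m := by
  have h : (descPochhammer ℤ m).eval c = m ! • Ring.choose c m := by
    rw [eval_eq_smeval, Ring.descPochhammer_eq_factorial_smul_choose]
  rw [binomialPoly, eval_mul, eval_C, ← descPochhammer_map (Int.castRingHom ℚ), eval_intCast_map,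
    eq_intCast, Int.cast_id, h, nsmul_eq_mul, Int.cast_mul, Int.cast_natCast,
    inv_mul_cancel_left₀ (by positivity)]

lemma natDegree_binomialPoly (m : ℕ) : (binomialPoly m).natDegree = m := by
  rw [binomialPoly, natDegree_C_mul (by positivity), descPochhammer_natDegree]

lemma leadingCoeff_binomialPoly (m : ℕ) : (binomialPoly m).leadingCoeff = (m ! : ℚ)⁻¹ := by
  rw [binomialPoly, leadingCoeff_C_mul_of_isUnit (by simp; positivity),
    (monic_descPochhammer ℚ m).leadingCoeff, mul_one]

lemma X_mul_binomialPoly_comp (m : ℕ) :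
    X * (binomialPoly m).comp (X - 1) = C ((m + 1 : ℕ) : ℚ) * binomialPoly (m + 1) := by
  have hC : C ((m + 1 : ℕ) : ℚ) * C ((m + 1)! : ℚ)⁻¹ = C (m ! : ℚ)⁻¹ := by
    rw [← C_mul, factorial_succ, Nat.cast_mul, mul_inv, mul_inv_cancel_left₀ (by positivity)]
  rw [binomialPoly, binomialPoly, descPochhammer_succ_left, mul_comp, C_comp, ← mul_assoc (C _),
    hC]
  ring

namespace IntValued

lemma exists_factorial_mul_leadingCoeff_eq_intCast (f : IntValued) :
    ∃ t : ℤ, ((f : ℚ[X]).natDegree ! : ℚ) * (f : ℚ[X]).leadingCoeff = t := by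
  obtain ⟨t, ht⟩ :=
    exists_fwdDiff_iter_eq_intCast (f := fun x => (f : ℚ[X]).eval x) f.2 (f : ℚ[X]).natDegree 0
  refine ⟨t, ?_⟩
  rw [← ht, fwdDiff_iter_degree_eq_factorial]
  simp [mul_comm]

noncomputable def evalHom (c : ℤ) : IntValued →+* ℤ where
  toFun g := (g.2 c).choose
  map_one' := Int.cast_injective (α := ℚ) <| by
    rw [← ((1 : IntValued).2 c).choose_spec]; simp
  map_mul' g h := Int.cast_injective (α := ℚ) <| by
    rw [← ((g * h).2 c).choose_spec, Int.cast_mul, ← (g.2 c).choose_spec,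
      ← (h.2 c).choose_spec, Subring.coe_mul, eval_mul]
  map_zero' := Int.cast_injective (α := ℚ) <| by
    rw [← ((0 : IntValued).2 c).choose_spec]; simp
  map_add' g h := Int.cast_injective (α := ℚ) <| by
    rw [← ((g + h).2 c).choose_spec, Int.cast_add, ← (g.2 c).choose_spec,
      ← (h.2 c).choose_spec, Subring.coe_add, eval_add]

@[simp]
lemma cast_evalHom (c : ℤ) (g : IntValued) : (evalHom c g : ℚ) = (g : ℚ[X]).eval (c : ℚ) :=
  (g.2 c).choose_spec.symm

theorem isUnit_iff {g : IntValued} (c : ℤ) :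
    IsUnit g ↔ (g : ℚ[X]).natDegree = 0 ∧ IsUnit (evalHom c g) := by
  refine ⟨fun hg => ⟨natDegree_eq_zero_of_isUnit (hg.map IntValued.subtype), hg.map (evalHom c)⟩,
    fun ⟨hdeg, hunit⟩ => ?_⟩
  obtain ⟨q, hq⟩ : ∃ q, (g : ℚ[X]) = C q := ⟨_, eq_C_of_natDegree_eq_zero hdeg⟩
  have hg : (g : ℚ[X]) = C (evalHom c g : ℚ) := by rw [cast_evalHom, hq, eval_C]
  -- a constant `±1` is its own inverse
  refine IsUnit.of_mul_eq_one g (Subtype.ext ?_)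
  rw [Subring.coe_mul, hg, ← C_mul, ← Int.cast_mul, Int.isUnit_mul_self hunit]
  simp

lemma natDegree_add_natDegree_of_eq_mul {f g h : IntValued} (hf : (f : ℚ[X]) ≠ 0)
    (hfgh : f = g * h) :
    (g : ℚ[X]).natDegree + (h : ℚ[X]).natDegree = (f : ℚ[X]).natDegree := by
  rw [hfgh, Subring.coe_mul] at hf ⊢
  exact (natDegree_mul (left_ne_zero_of_mul hf) (right_ne_zero_of_mul hf)).symm

theorem irreducible_intCast {p : ℤ} (hp : Irreducible p) : Irreducible (p : IntValued) := by
  refine ⟨fun hu => hp.not_isUnit (by simpa using hu.map (evalHom 0)), fun g h hgh => ?_⟩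
  have hdeg := natDegree_add_natDegree_of_eq_mul (by simpa using hp.ne_zero) hgh
  rw [Subring.coe_intCast, natDegree_intCast] at hdeg
  have hp' : p = evalHom 0 g * evalHom 0 h := by simpa using congrArg (evalHom 0) hgh
  exact (hp.isUnit_or_isUnit hp').imp (fun hg => (isUnit_iff 0).2 ⟨by omega, hg⟩)
    (fun hh => (isUnit_iff 0).2 ⟨by omega, hh⟩)

lemma choose_natDegree_eq_one_of_eq_mul {f g h : IntValued} {m : ℕ}
    (hdeg : (f : ℚ[X]).natDegree = m) (hlc : (f : ℚ[X]).leadingCoeff = (m ! : ℚ)⁻¹)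
    (hfgh : f = g * h) : m.choose (h : ℚ[X]).natDegree = 1 := by
  have hf : (f : ℚ[X]) ≠ 0 := by rw [← leadingCoeff_ne_zero, hlc]; positivity
  have hsum := natDegree_add_natDegree_of_eq_mul hf hfgh
  set k := (g : ℚ[X]).natDegree
  set l := (h : ℚ[X]).natDegree
  obtain ⟨u, hu⟩ := exists_factorial_mul_leadingCoeff_eq_intCast g
  obtain ⟨s, hs⟩ := exists_factorial_mul_leadingCoeff_eq_intCast h
  have hlc' : (g : ℚ[X]).leadingCoeff * (h : ℚ[X]).leadingCoeff = ((k + l)! : ℚ)⁻¹ := by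
    rw [← leadingCoeff_mul, ← Subring.coe_mul, ← hfgh, hlc, hsum, hdeg]
  -- `m! lc(f) = 1` splits as `choose m k * (k! lc(g)) * (l! lc(h))` with integral factors
  have key : ((m.choose l : ℤ) * (u * s) : ℚ) = 1 := by
    rw [← add_choose_mul_factorial_mul_factorial k l] at hlc'
    have hN : (((k + l).choose l * k ! * l ! : ℕ) : ℚ) ≠ 0 := by
      have := Nat.choose_pos (Nat.le_add_left l k); positivity
    calc _ = (((k + l).choose l * k ! * l ! : ℕ) : ℚ)
          * ((g : ℚ[X]).leadingCoeff * (h : ℚ[X]).leadingCoeff) := by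
          rw [← hu, ← hs, ← hdeg, ← hsum]; push_cast; ring
      _ = 1 := by rw [hlc', mul_inv_cancel₀ hN]
  exact_mod_cast Int.eq_one_of_mul_eq_one_right (Int.natCast_nonneg _) (by exact_mod_cast key)

theorem irreducible_of_leadingCoeff_eq_inv_factorial {f : IntValued} {m : ℕ} (hm : m ≠ 0)
    (hdeg : (f : ℚ[X]).natDegree = m) (hlc : (f : ℚ[X]).leadingCoeff = (m ! : ℚ)⁻¹) {c : ℤ}
    (hc : IsUnit (evalHom c f)) : Irreducible f := by
  refine ⟨fun hu => hm (hdeg ▸ ((isUnit_iff c).1 hu).1), fun g h hgh => ?_⟩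
  have hf : (f : ℚ[X]) ≠ 0 := by rw [← leadingCoeff_ne_zero, hlc]; positivity
  have hsum := natDegree_add_natDegree_of_eq_mul hf hgh
  rw [hgh, map_mul] at hc
  rcases Nat.choose_eq_one_iff.1 (choose_natDegree_eq_one_of_eq_mul hdeg hlc hgh) with hl | hl
  · exact Or.inr ((isUnit_iff c).2 ⟨hl, isUnit_of_mul_isUnit_right hc⟩)
  · exact Or.inl ((isUnit_iff c).2 ⟨by omega, isUnit_of_mul_isUnit_left hc⟩)

noncomputable def binomial (a : ℤ) (m : ℕ) : IntValued :=
  ⟨taylor (a : ℚ) (binomialPoly m), fun c =>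
    ⟨Ring.choose (c + a) m, by rw [taylor_eval, ← Int.cast_add, binomialPoly_eval_intCast]⟩⟩

lemma coe_binomial (a : ℤ) (m : ℕ) : (binomial a m : ℚ[X]) = taylor (a : ℚ) (binomialPoly m) :=
  rfl

lemma evalHom_binomial (a c : ℤ) (m : ℕ) : evalHom c (binomial a m) = Ring.choose (c + a) m :=
  Int.cast_injective (α := ℚ) <| by
    rw [cast_evalHom, coe_binomial, taylor_eval, ← Int.cast_add, binomialPoly_eval_intCast]

theorem irreducible_binomial (a : ℤ) {m : ℕ} (hm : m ≠ 0) : Irreducible (binomial a m) :=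
  irreducible_of_leadingCoeff_eq_inv_factorial hm
    (by rw [coe_binomial, natDegree_taylor, natDegree_binomialPoly])
    (by rw [coe_binomial, leadingCoeff_taylor, leadingCoeff_binomialPoly]) (c := m - a)
    (by rw [evalHom_binomial, sub_add_cancel, Ring.choose_natCast, Nat.choose_self,
      Nat.cast_one]; exact isUnit_one)

theorem Xiv_mul_binomial (m : ℕ) :
    Xiv * binomial (-1) m = ((m + 1 : ℕ) : IntValued) * binomial 0 (m + 1) := by
  apply Subtype.ext
  rw [Subring.coe_mul, Subring.coe_mul, Subring.coe_natCast, coe_binomial, coe_binomial,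
    Int.cast_zero, taylor_zero, taylor_apply, Int.cast_neg, Int.cast_one, C_neg, C_1,
    ← sub_eq_add_neg, ← C_eq_natCast, ← X_mul_binomialPoly_comp]
  rfl

end IntValued

open IntValued in
/-- For every `n ≥ 1` there are irreducibles `H, G₁, …, G_{n+1}` of `Int(ℤ)` with
`X · H = G₁ ⋯ G_{n+1}`. -/
theorem x_mul_irreducible_long_factorization (n : ℕ) (hn : 1 ≤ n) :
    ∃ H : IntValued, ∃ G : Fin (n + 1) → IntValued,
      Irreducible H ∧ (∀ i, Irreducible (G i)) ∧
      Xiv * H = ∏ i, G i := by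
  obtain ⟨m, hm⟩ : ∃ m, 2 ^ n = m + 1 :=
    ⟨2 ^ n - 1, by have := Nat.one_le_two_pow (n := n); omega⟩
  have hm0 : m ≠ 0 := by
    have := Nat.pow_le_pow_right two_pos hn
    omega
  refine ⟨binomial (-1) m, Fin.cons (binomial 0 (m + 1)) fun _ => ((2 : ℤ) : IntValued),
    irreducible_binomial _ hm0, fun i => Fin.cases (irreducible_binomial _ m.succ_ne_zero)
      (fun _ => irreducible_intCast Int.prime_two.irreducible) i, ?_⟩
  rw [Fin.prod_univ_succ, Fin.cons_zero, Xiv_mul_binomial, ← hm, mul_comm]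
  simp
end

section
/- Let g ∈ ℤ[X] be primitive and non-constant, and let a ∈ ℤ, b ∈ ℕ with b ≥ 1 and gcd(a, b) = 1, such that f = (a/b) · g lies in Int(ℤ). If f is irreducible in Int(ℤ), then a = ±1 and b equals the fixed divisor d(g). -/
open Polynomial

/-- The fixed divisor `d(f)` of `f ∈ ℤ[X]`: the nonnegative generator of the
ideal of ℤ generated by the image `f(ℤ)`. -/
noncomputable def fixedDivisor (f : Polynomial ℤ) : ℕ :=
  (@Submodule.IsPrincipal.generator ℤ ℤ _ _ _
    (Ideal.span (Set.range fun c : ℤ => f.eval c))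
    (IsPrincipalIdealRing.principal _)).natAbs

/-!
As `gcd(a, b) = 1` and `(a/b)·g(c) ∈ ℤ`, `b` divides every value of `g`, hence
`d(g) = b·k`. Then `f = (a·k)·(g/d(g))` in `Int(ℤ)`, and `g/d(g)` is not a unit since it is
non-constant, so irreducibility forces `a·k = ±1`, i.e. `a = ±1` and `k = 1`.
-/

theorem dvd_fixedDivisor_iff (g : ℤ[X]) (n : ℤ) :
    n ∣ (fixedDivisor g : ℤ) ↔ ∀ c : ℤ, n ∣ g.eval c := by
  set I := Ideal.span (Set.range fun c : ℤ => g.eval c)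
  have hI : I = Ideal.span {Submodule.IsPrincipal.generator I} :=
    (Ideal.span_singleton_generator I).symm
  rw [fixedDivisor, Int.dvd_natAbs, ← Ideal.span_singleton_le_span_singleton, ← hI,
    Ideal.span_le, Set.range_subset_iff]
  simp only [SetLike.mem_coe, Ideal.mem_span_singleton]

theorem fixedDivisor_dvd_eval (g : ℤ[X]) (c : ℤ) : (fixedDivisor g : ℤ) ∣ g.eval c :=
  (dvd_fixedDivisor_iff g _).mp dvd_rfl c

theorem fixedDivisor_ne_zero {g : ℤ[X]} (hg : g ≠ 0) : fixedDivisor g ≠ 0 := by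
  intro h
  refine hg (zero_of_eval_zero _ fun c => ?_)
  simpa [h] using fixedDivisor_dvd_eval g c

namespace IntValued

theorem C_inv_mul_map_mem {g : ℤ[X]} {n : ℤ} (hn : ∀ c : ℤ, n ∣ g.eval c) :
    C ((n : ℚ)⁻¹) * g.map (Int.castRingHom ℚ) ∈ IntValued := by
  intro c
  rcases eq_or_ne n 0 with rfl | hn0
  · exact ⟨0, by simp⟩
  obtain ⟨m, hm⟩ := hn c
  refine ⟨m, ?_⟩
  simp only [eval_mul, eval_C, eval_intCast_map, Int.cast_eq, hm, eq_intCast, Int.cast_mul]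
  field_simp

theorem natCast_dvd_eval_of_C_div_mul_map_mem {g : ℤ[X]} {a : ℤ} {b : ℕ} (hb : b ≠ 0)
    (hab : Int.gcd a b = 1) (hmem : C ((a : ℚ) / b) * g.map (Int.castRingHom ℚ) ∈ IntValued)
    (c : ℤ) : (b : ℤ) ∣ g.eval c := by
  obtain ⟨m, hm⟩ := hmem c
  have hbq : (b : ℚ) ≠ 0 := by exact_mod_cast hb
  have hq : ((a * g.eval c : ℤ) : ℚ) = ((b * m : ℤ) : ℚ) := by
    simp only [eval_mul, eval_C, eval_intCast_map, eq_intCast, Int.cast_id] at hm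
    push_cast
    rw [← hm]
    field_simp
  have hdvd : (b : ℤ) ∣ a * g.eval c := ⟨m, Int.cast_injective hq⟩
  exact Int.dvd_of_dvd_mul_right_of_gcd_one hdvd (by rwa [Int.gcd_comm])

theorem isUnit_of_isUnit_intCast {m : ℤ} (h : IsUnit (m : IntValued)) : IsUnit m := by
  obtain ⟨v, hv⟩ := isUnit_iff_exists_inv.mp h
  obtain ⟨n, hn⟩ := v.2 0
  have hq : ((m * n : ℤ) : ℚ) = 1 := by
    have := congrArg (fun p : IntValued => (p : ℚ[X]).eval ((0 : ℤ) : ℚ)) hv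
    simp only [Subring.coe_mul, Subring.coe_intCast, eval_mul, eval_intCast, hn,
      Subring.coe_one, eval_one] at this
    exact_mod_cast this
  exact IsUnit.of_mul_eq_one n (by exact_mod_cast hq)

theorem not_isUnit_of_natDegree_pos {f : IntValued} (hf : 0 < (f : ℚ[X]).natDegree) :
    ¬ IsUnit f := fun hu =>
  hf.ne' (natDegree_eq_zero_of_isUnit (hu.map IntValued.subtype))

end IntValued

theorem irreducible_imp_unit_num_and_fixedDivisor_den_general
    (g : Polynomial ℤ) (hnc : 0 < g.natDegree)
    (a : ℤ) (b : ℕ) (hb : 1 ≤ b) (hab : Int.gcd a b = 1)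
    (f : IntValued)
    (hf : (f : Polynomial ℚ)
        = Polynomial.C ((a : ℚ) / (b : ℚ)) * g.map (Int.castRingHom ℚ))
    (hirr : Irreducible f) :
    (a = 1 ∨ a = -1) ∧ b = fixedDivisor g := by
  have hg0 : g ≠ 0 := by rintro rfl; simp at hnc
  obtain ⟨k, hk⟩ : b ∣ fixedDivisor g := Int.natCast_dvd_natCast.mp <|
    (dvd_fixedDivisor_iff g b).mpr <| IntValued.natCast_dvd_eval_of_C_div_mul_map_mem
      (by omega) hab (hf ▸ f.2)
  have hd0 : ((fixedDivisor g : ℤ) : ℚ) ≠ 0 := by exact_mod_cast fixedDivisor_ne_zero hg0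
  let y : IntValued := ⟨_, IntValued.C_inv_mul_map_mem (fixedDivisor_dvd_eval g)⟩
  have hfy : f = ((a * k : ℤ) : IntValued) * y := by
    have hk0 : (k : ℚ) ≠ 0 := Nat.cast_ne_zero.mpr (by rintro rfl; simp [hk] at hd0)
    ext1
    rw [hf, Subring.coe_mul, Subring.coe_intCast, ← C_eq_intCast, ← mul_assoc, ← C_mul, hk]
    congr 2
    push_cast
    field_simp
  have hy : 0 < (y : ℚ[X]).natDegree := by
    show 0 < (C _ * _).natDegree
    rwa [natDegree_C_mul (inv_ne_zero hd0), natDegree_map_eq_of_injective Int.cast_injective]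
  have hak := IntValued.isUnit_of_isUnit_intCast <|
    (hirr.isUnit_or_isUnit hfy).resolve_right (IntValued.not_isUnit_of_natDegree_pos hy)
  have hk1 : k = 1 := Nat.isUnit_iff.mp (Int.ofNat_isUnit.mp (isUnit_of_mul_isUnit_right hak))
  exact ⟨Int.isUnit_iff.mp (isUnit_of_mul_isUnit_left hak), by rw [hk, hk1, mul_one]⟩

/-- Remark 1 (iii): if `f = (a/b)·g ∈ Int(ℤ)` with `g` primitive non-constant,
`gcd(a,b) = 1`, is irreducible in `Int(ℤ)`, then `a = ±1` and `b = d(g)`. -/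
theorem irreducible_imp_unit_num_and_fixedDivisor_den
    (g : Polynomial ℤ) (hg : g.IsPrimitive) (hnc : 0 < g.natDegree)
    (a : ℤ) (b : ℕ) (hb : 1 ≤ b) (hab : Int.gcd a b = 1)
    (f : IntValued)
    (hf : (f : Polynomial ℚ)
        = Polynomial.C ((a : ℚ) / (b : ℚ)) * g.map (Int.castRingHom ℚ))
    (hirr : Irreducible f) :
    (a = 1 ∨ a = -1) ∧ b = fixedDivisor g :=
  irreducible_imp_unit_num_and_fixedDivisor_den_general g hnc a b hb hab f hf hirr
end
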